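/- arXiv:2302.11725 — 5 statements merged into one kernel-verified Lean document; each statement's English description precedes it below -/
import Mathlib

section
/- For n ≥ 2, the Sen–Yates–Grundy variance estimator V̂ = (1/(n(n−1)))(Σ_{k=1}^n (y_{I_k}/p_{I_k})² − n t̂_HH²) is an unbiased estimator of the variance of the Hansen–Hurwitz estimator: E[V̂] = Var(t̂_HH). -/
open Finset

/-- Expectation of a real-valued function `f` of a random element of a finite
type `Ω`, whose law is given by the probability mass function `q`. -/
noncomputable def expVal {Ω : Type*} [Fintype Ω] (q f : Ω → ℝ) : ℝ :=
  ∑ ω, q ω * f ω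

/-- Variance of `f` under the probability mass function `q`. -/
noncomputable def varVal {Ω : Type*} [Fintype Ω] (q f : Ω → ℝ) : ℝ :=
  expVal q fun ω => (f ω - expVal q f) ^ 2

private lemma pi_sum_prod {U : Type*} [Fintype U] (n : ℕ) (G : Fin n → U → ℝ) :
    ∑ ω : Fin n → U, ∏ m, G m (ω m) = ∏ m, ∑ i, G m i := by
  rw [Finset.prod_univ_sum, Fintype.piFinset_univ]

private lemma exp_single {U : Type*} [Fintype U] {p : U → ℝ}
    (hpsum : ∑ i, p i = 1) {n : ℕ} (k : Fin n) (f : U → ℝ) :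
    ∑ ω : Fin n → U, (∏ m, p (ω m)) * f (ω k) = ∑ i, p i * f i := by
  have h : ∀ ω : Fin n → U, (∏ m, p (ω m)) * f (ω k)
      = ∏ m, (p (ω m) * (if m = k then f (ω m) else 1)) := by
    intro ω
    rw [Finset.prod_mul_distrib, Finset.prod_ite_eq' Finset.univ k (fun m => f (ω m))]
    simp
  simp_rw [h]
  rw [pi_sum_prod n (fun m i => p i * (if m = k then f i else 1))]
  have h2 : ∀ m : Fin n, (∑ i, p i * (if m = k then f i else 1))
      = if m = k then ∑ i, p i * f i else 1 := by
    intro m; by_cases hm : m = k <;> simp [hm, hpsum]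
  simp_rw [h2]
  rw [Finset.prod_ite_eq' Finset.univ k (fun _ => ∑ i, p i * f i)]
  simp

private lemma exp_pair {U : Type*} [Fintype U] {p : U → ℝ}
    (hpsum : ∑ i, p i = 1) {n : ℕ} {k l : Fin n} (hkl : k ≠ l) (f f' : U → ℝ) :
    ∑ ω : Fin n → U, (∏ m, p (ω m)) * (f (ω k) * f' (ω l))
      = (∑ i, p i * f i) * (∑ i, p i * f' i) := by
  have h : ∀ ω : Fin n → U, (∏ m, p (ω m)) * (f (ω k) * f' (ω l))
      = ∏ m, (p (ω m) * ((if m = k then f (ω m) else 1) * (if m = l then f' (ω m) else 1))) := by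
    intro ω
    rw [Finset.prod_mul_distrib, Finset.prod_mul_distrib,
      Finset.prod_ite_eq' Finset.univ k (fun m => f (ω m)),
      Finset.prod_ite_eq' Finset.univ l (fun m => f' (ω m))]
    simp
  simp_rw [h]
  rw [pi_sum_prod n (fun m i => p i * ((if m = k then f i else 1) * (if m = l then f' i else 1)))]
  have h2 : ∀ m : Fin n, (∑ i, p i * ((if m = k then f i else 1) * (if m = l then f' i else 1)))
      = (if m = k then ∑ i, p i * f i else 1) * (if m = l then ∑ i, p i * f' i else 1) := by
    intro m
    by_cases hmk : m = k
    · subst hmk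
      simp [hkl]
    · by_cases hml : m = l
      · subst hml; simp [Ne.symm hkl, hpsum]
      · simp [hmk, hml, hpsum]
  simp_rw [h2]
  rw [Finset.prod_mul_distrib,
    Finset.prod_ite_eq' Finset.univ k (fun _ => ∑ i, p i * f i),
    Finset.prod_ite_eq' Finset.univ l (fun _ => ∑ i, p i * f' i)]
  simp

/-- **Unbiasedness of the Sen–Yates–Grundy variance estimator.**
For a multinomial sample `ω : Fin n → U` of size `n ≥ 2` with draw
probabilities `p`, the estimator
`V̂ = (1/(n(n−1)))(∑ k (y(ω k)/p(ω k))² − n t̂_HH²)` satisfies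
`E[V̂] = Var(t̂_HH)`, where `t̂_HH = (1/n) ∑ k y(ω k)/p(ω k)`. -/
theorem sen_yates_grundy_unbiased
    {U : Type*} [Fintype U] [Nonempty U]
    (y p : U → ℝ) (hp : ∀ i, 0 < p i) (hpsum : ∑ i, p i = 1)
    (n : ℕ) (hn : 2 ≤ n) :
    expVal (fun ω : Fin n → U => ∏ k, p (ω k))
      (fun ω => (1 / ((n : ℝ) * ((n : ℝ) - 1))) *
        ((∑ k, (y (ω k) / p (ω k)) ^ 2)
          - (n : ℝ) * ((1 / (n : ℝ)) * ∑ k, y (ω k) / p (ω k)) ^ 2))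
    = varVal (fun ω : Fin n → U => ∏ k, p (ω k))
        (fun ω => (1 / (n : ℝ)) * ∑ k, y (ω k) / p (ω k)) := by
  classical
  simp only [varVal, expVal]
  set g : U → ℝ := fun i => y i / p i with hg
  have hgb : ∀ i : U, y i / p i = g i := fun i => rfl
  simp only [hgb]
  set q : (Fin n → U) → ℝ := fun ω => ∏ m, p (ω m) with hq
  have hqb : ∀ ω : Fin n → U, (∏ k, p (ω k)) = q ω := fun ω => rfl
  simp only [hqb]
  set A : ℝ := ∑ i, p i * g i with hA
  set B : ℝ := ∑ i, p i * g i ^ 2 with hB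
  have hn0 : (n : ℝ) ≠ 0 := by positivity
  have hn1 : (n : ℝ) - 1 ≠ 0 := by
    have : (2 : ℝ) ≤ (n : ℝ) := by exact_mod_cast hn
    nlinarith
  have hQ : ∑ ω : Fin n → U, q ω = 1 := by
    rw [hq, pi_sum_prod n (fun _ => p)]
    simp [hpsum]
  have hE1 : ∑ ω : Fin n → U, q ω * (∑ k, g (ω k)) = (n : ℝ) * A := by
    simp_rw [Finset.mul_sum]
    rw [Finset.sum_comm]
    have h : ∀ k : Fin n, ∑ ω : Fin n → U, q ω * g (ω k) = A := by
      intro k; exact exp_single hpsum k g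
    simp [h, Finset.card_univ]
  have hE2 : ∑ ω : Fin n → U, q ω * (∑ k, g (ω k) ^ 2) = (n : ℝ) * B := by
    simp_rw [Finset.mul_sum]
    rw [Finset.sum_comm]
    have h : ∀ k : Fin n, ∑ ω : Fin n → U, q ω * g (ω k) ^ 2 = B := by
      intro k; exact exp_single hpsum k (fun i => g i ^ 2)
    simp [h, Finset.card_univ]
  have hEsq : ∑ ω : Fin n → U, q ω * (∑ k, g (ω k)) ^ 2
      = (n : ℝ) * B + ((n : ℝ) ^ 2 - n) * A ^ 2 := by
    have step1 : ∑ ω : Fin n → U, q ω * (∑ k, g (ω k)) ^ 2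
        = ∑ k, ∑ l, ∑ ω : Fin n → U, q ω * (g (ω k) * g (ω l)) := by
      simp_rw [sq, Finset.sum_mul_sum, Finset.mul_sum]
      rw [Finset.sum_comm]
      exact Finset.sum_congr rfl fun k _ => Finset.sum_comm
    rw [step1]
    have step2 : ∀ k l : Fin n, ∑ ω : Fin n → U, q ω * (g (ω k) * g (ω l))
        = if k = l then B else A ^ 2 := by
      intro k l
      by_cases hkl : k = l
      · subst hkl
        rw [if_pos rfl]
        have h := exp_single hpsum k (fun i => g i * g i)
        calc ∑ ω : Fin n → U, q ω * (g (ω k) * g (ω k))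
            = ∑ i, p i * (g i * g i) := h
          _ = B := by rw [hB]; exact Finset.sum_congr rfl (fun i _ => by ring)
      · rw [if_neg hkl, sq]
        exact exp_pair hpsum hkl g g
    simp_rw [step2]
    have step3 : ∀ k l : Fin n, (if k = l then B else A ^ 2)
        = A ^ 2 + (if k = l then B - A ^ 2 else 0) := by
      intro k l; split <;> ring
    simp_rw [step3, Finset.sum_add_distrib, Finset.sum_ite_eq]
    simp [Finset.card_univ]
    ring
  have hm : ∑ ω : Fin n → U, q ω * ((1 / (n : ℝ)) * ∑ k, g (ω k)) = A := by
    have h : ∀ ω : Fin n → U, q ω * ((1 / (n : ℝ)) * ∑ k, g (ω k))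
        = (1 / (n : ℝ)) * (q ω * ∑ k, g (ω k)) := by intro ω; ring
    simp_rw [h, ← Finset.mul_sum, hE1]
    field_simp
  rw [hm]
  have lhs_eq : ∑ ω : Fin n → U, q ω * ((1 / ((n : ℝ) * ((n : ℝ) - 1))) *
        ((∑ k, g (ω k) ^ 2) - (n : ℝ) * ((1 / (n : ℝ)) * ∑ k, g (ω k)) ^ 2))
      = (1 / ((n : ℝ) * ((n : ℝ) - 1))) * (((n : ℝ) * B)
          - ((n : ℝ) * (1 / (n : ℝ)) ^ 2) * ((n : ℝ) * B + ((n : ℝ) ^ 2 - n) * A ^ 2)) := by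
    have expand : ∀ ω : Fin n → U, q ω * ((1 / ((n : ℝ) * ((n : ℝ) - 1))) *
          ((∑ k, g (ω k) ^ 2) - (n : ℝ) * ((1 / (n : ℝ)) * ∑ k, g (ω k)) ^ 2))
        = (1 / ((n : ℝ) * ((n : ℝ) - 1))) * (q ω * (∑ k, g (ω k) ^ 2))
          - (1 / ((n : ℝ) * ((n : ℝ) - 1))) * ((n : ℝ) * (1 / (n : ℝ)) ^ 2)
              * (q ω * (∑ k, g (ω k)) ^ 2) := by
      intro ω; ring
    simp_rw [expand, Finset.sum_sub_distrib, ← Finset.mul_sum, hE2, hEsq]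
    ring
  have rhs_eq : ∑ ω : Fin n → U, q ω *
        (((1 / (n : ℝ)) * ∑ k, g (ω k)) - A) ^ 2
      = (1 / (n : ℝ)) ^ 2 * ((n : ℝ) * B + ((n : ℝ) ^ 2 - n) * A ^ 2)
        - 2 * A * (1 / (n : ℝ)) * ((n : ℝ) * A) + A ^ 2 * 1 := by
    have expand : ∀ ω : Fin n → U, q ω *
          (((1 / (n : ℝ)) * ∑ k, g (ω k)) - A) ^ 2
        = (1 / (n : ℝ)) ^ 2 * (q ω * (∑ k, g (ω k)) ^ 2)
          - 2 * A * (1 / (n : ℝ)) * (q ω * (∑ k, g (ω k))) + A ^ 2 * q ω := by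
      intro ω; ring
    simp_rw [expand, Finset.sum_add_distrib, Finset.sum_sub_distrib, ← Finset.mul_sum,
      hE1, hEsq, hQ]
  rw [lhs_eq, rhs_eq]
  field_simp
  ring
end

section
/- WIS is a special case of the regression-assisted DR estimator (Theorem 1): take the constant feature φ(s,a) = 1 for all (s,a), so that β̂_n = (Σ_{i=1}^n w_i)⁻¹ (Σ_{i=1}^n w_i r(S_i,A_i)) where w_i = π(A_i|S_i)/π_b(A_i|S_i). Then, for every realized sample (since Σ_{i=1}^n w_i > 0 automatically), the regression-assisted DR estimator t̂_Reg,n = Σ_{s,a} P(s)π(a|s) β̂_n + (1/n) Σ_{i=1}^n w_i (r(S_i,A_i) − β̂_n) equals the weighted importance sampling estimator Σ_{i=1}^n (w_i / Σ_{j=1}^n w_j) r(S_i,A_i). -/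
/-!
With the constant feature, `β̂` is the `w`-weighted mean (center of mass) of the observed rewards,
so the weighted residuals in the correction term cancel, while the model term is `β̂` times the
total mass `1` of `P ⊗ π`; what is left is `β̂` itself, i.e. the WIS estimator.
-/

open Finset

section CenterMass

variable {ι R E : Type*} [Field R] [LinearOrder R] [IsStrictOrderedRing R]
  [AddCommGroup E] [Module R E]

/-- Nonnegativity handles the degenerate case: weights summing to zero all vanish, so the junk
value `(0 : R)⁻¹ = 0` inside `centerMass` does no harm. -/
theorem Finset.sum_smul_sub_centerMass_eq_zero (t : Finset ι) {w : ι → R} (z : ι → E)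
    (hw : ∀ i ∈ t, 0 ≤ w i) : ∑ i ∈ t, w i • (z i - t.centerMass w z) = 0 := by
  simp only [smul_sub, sum_sub_distrib, ← sum_smul]
  by_cases hW : ∑ i ∈ t, w i = 0
  · have hzero : ∀ i ∈ t, w i = 0 := (sum_eq_zero_iff_of_nonneg hw).1 hW
    rw [hW, zero_smul, sub_zero]
    exact sum_eq_zero fun i hi => by rw [hzero i hi, zero_smul]
  · rw [centerMass, smul_inv_smul₀ hW, sub_self]

end CenterMass

theorem Finset.sum_div_sum_mul_eq_centerMass {ι R : Type*} [Field R] (t : Finset ι)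
    (w z : ι → R) : ∑ i ∈ t, w i / (∑ j ∈ t, w j) * z i = t.centerMass w z := by
  simp only [centerMass, smul_eq_mul, mul_sum]
  exact sum_congr rfl fun i _ => by ring

theorem sum_sum_mul_eq_one_of_sum_eq_one {S A : Type*} [Fintype S] [Fintype A]
    (P : S → ℝ) (pol : S → A → ℝ) (hPsum : ∑ s, P s = 1) (hpolsum : ∀ s, ∑ a, pol s a = 1) :
    ∑ s, ∑ a, P s * pol s a = 1 := by
  simp only [← mul_sum, hpolsum, mul_one, hPsum]

theorem wis_special_case_of_regression_dr_general
    {S A : Type*} [Fintype S] [Fintype A]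
    (P : S → ℝ) (pol polb : S → A → ℝ) (r : S → A → ℝ)
    (hPsum : ∑ s, P s = 1)
    (hpol : ∀ s a, 0 ≤ pol s a) (hpolsum : ∀ s, ∑ a, pol s a = 1)
    (hpolb : ∀ s a, 0 < polb s a)
    (n : ℕ) (SA : Fin n → S × A) :
    (let w : Fin n → ℝ := fun i => pol (SA i).1 (SA i).2 / polb (SA i).1 (SA i).2
    let betaHat : ℝ := (∑ i, w i)⁻¹ * (∑ i, w i * r (SA i).1 (SA i).2)
    (∑ s, ∑ a, P s * pol s a) * betaHat
      + (1 / (n : ℝ)) * ∑ i, w i * (r (SA i).1 (SA i).2 - betaHat)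
    = ∑ i, w i / (∑ j, w j) * r (SA i).1 (SA i).2) := by
  intro w betaHat
  have hw : ∀ i ∈ univ, 0 ≤ w i := fun i _ => div_nonneg (hpol _ _) (hpolb _ _).le
  have hbeta : betaHat = univ.centerMass w fun i => r (SA i).1 (SA i).2 := rfl
  have hresid : ∑ i, w i * (r (SA i).1 (SA i).2 - betaHat) = 0 :=
    hbeta ▸ univ.sum_smul_sub_centerMass_eq_zero _ hw
  rw [sum_sum_mul_eq_one_of_sum_eq_one P pol hPsum hpolsum, hresid, one_mul, mul_zero, add_zero,
    hbeta, sum_div_sum_mul_eq_centerMass]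

/-- **WIS is a special case of the regression-assisted DR estimator
(Theorem 1).**  With the constant feature `φ(s,a) = 1`, the estimated
coefficient is `β̂ = (∑ i w i)⁻¹ (∑ i w i r(S_i,A_i))` where
`w i = π(A_i|S_i)/π_b(A_i|S_i)`.  For every realized sample
`SA : Fin n → S × A`, the regression-assisted DR estimator
`t̂_Reg = (∑_{s,a} P(s)π(a|s)) β̂ + (1/n) ∑ i w i (r(S_i,A_i) − β̂)`
equals the weighted importance sampling estimator
`∑ i (w i / ∑ j w j) r(S_i,A_i)`. -/
theorem wis_special_case_of_regression_dr
    {S A : Type*} [Fintype S] [Fintype A] [Nonempty S] [Nonempty A]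
    (P : S → ℝ) (pol polb : S → A → ℝ) (r : S → A → ℝ)
    (hP : ∀ s, 0 < P s) (hPsum : ∑ s, P s = 1)
    (hpol : ∀ s a, 0 ≤ pol s a) (hpolsum : ∀ s, ∑ a, pol s a = 1)
    (hpolb : ∀ s a, 0 < polb s a) (hpolbsum : ∀ s, ∑ a, polb s a = 1)
    (n : ℕ) (hn : 1 ≤ n) (SA : Fin n → S × A) :
    (let w : Fin n → ℝ := fun i => pol (SA i).1 (SA i).2 / polb (SA i).1 (SA i).2
    let betaHat : ℝ := (∑ i, w i)⁻¹ * (∑ i, w i * r (SA i).1 (SA i).2)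
    (∑ s, ∑ a, P s * pol s a) * betaHat
      + (1 / (n : ℝ)) * ∑ i, w i * (r (SA i).1 (SA i).2 - betaHat)
    = ∑ i, w i / (∑ j, w j) * r (SA i).1 (SA i).2) :=
  wis_special_case_of_regression_dr_general P pol polb r hPsum hpol hpolsum hpolb n SA
end

section
/- g-weight representation of the regression-assisted estimator: suppose M_n = Σ_{i=1}^n w_i φ(S_i,A_i) φ(S_i,A_i)ᵀ is invertible, let β̂_n = M_n⁻¹ (Σ_{i=1}^n w_i φ(S_i,A_i) r(S_i,A_i)), let t_x = Σ_{s,a} P(s)π(a|s)φ(s,a), t̂_x = (1/n) Σ_{i=1}^n w_i φ(S_i,A_i), and define the g-weights g_i = 1 + n·(t_x − t̂_x)ᵀ M_n⁻¹ φ(S_i,A_i). Then (i) the g-weights calibrate on the features: (1/n) Σ_{i=1}^n w_i g_i φ(S_i,A_i) = t_x, and (ii) the regression-assisted DR estimator satisfies t̂_Reg,n = Σ_{s,a} P(s)π(a|s)φ(s,a)ᵀβ̂_n + (1/n) Σ_{i=1}^n w_i (r(S_i,A_i) − φ(S_i,A_i)ᵀβ̂_n) = (1/n) Σ_{i=1}^n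 w_i g_i r(S_i,A_i). This is a deterministic identity holding for every realized sample. -/
open Finset Matrix

noncomputable section

variable {S A : Type*} [Fintype S] [Fintype A] {d : ℕ}

/-- Importance weight `w = π(a|s)/π_b(a|s)` of a context-action pair. -/
def wgt (pol polb : S → A → ℝ) (x : S × A) : ℝ := pol x.1 x.2 / polb x.1 x.2

/-- The sample feature matrix `M_n = ∑ i w_i φ(S_i,A_i) φ(S_i,A_i)ᵀ`. -/
def sampleMat (pol polb : S → A → ℝ) (φ : S × A → Fin d → ℝ) {n : ℕ}
    (SA : Fin n → S × A) : Matrix (Fin d) (Fin d) ℝ :=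
  ∑ i, wgt pol polb (SA i) • vecMulVec (φ (SA i)) (φ (SA i))

/-- The sample weighted-least-squares coefficient
`β̂_n = M_n⁻¹ (∑ i w_i φ(S_i,A_i) r(S_i,A_i))`. -/
def betaHat (pol polb : S → A → ℝ) (r : S × A → ℝ) (φ : S × A → Fin d → ℝ) {n : ℕ}
    (SA : Fin n → S × A) : Fin d → ℝ :=
  (sampleMat pol polb φ SA)⁻¹ *ᵥ ∑ i, (wgt pol polb (SA i) * r (SA i)) • φ (SA i)

/-- The population feature total `t_x = ∑_{s,a} P(s)π(a|s)φ(s,a)`. -/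
def popFeat (P : S → ℝ) (pol : S → A → ℝ) (φ : S × A → Fin d → ℝ) : Fin d → ℝ :=
  ∑ x : S × A, (P x.1 * pol x.1 x.2) • φ x

/-- The g-weights `g_i = 1 + n (t_x − t̂_x)ᵀ M_n⁻¹ φ(S_i,A_i)`, where
`t̂_x = (1/n) ∑ i w_i φ(S_i,A_i)`. -/
def gWeight (P : S → ℝ) (pol polb : S → A → ℝ) (φ : S × A → Fin d → ℝ) {n : ℕ}
    (SA : Fin n → S × A) (i : Fin n) : ℝ :=
  1 + (n : ℝ) *
    ((popFeat P pol φ - (1 / (n : ℝ)) • ∑ j, wgt pol polb (SA j) • φ (SA j))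
      ⬝ᵥ ((sampleMat pol polb φ SA)⁻¹ *ᵥ φ (SA i)))

private lemma dotProduct_sum' {d : ℕ} {ι : Type*} [Fintype ι] (v : Fin d → ℝ)
    (f : ι → Fin d → ℝ) :
    v ⬝ᵥ (∑ i, f i) = ∑ i, v ⬝ᵥ f i := by
  simp only [dotProduct, Finset.sum_apply, Finset.mul_sum]
  exact Finset.sum_comm

/-- **g-weight representation of the regression-assisted DR estimator.**
For every realized sample, if the sample matrix `M_n` is invertible, then
(i) the g-weights calibrate on the features: `(1/n) ∑ i w_i g_i φ(S_i,A_i) = t_x`,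
and (ii) the regression-assisted DR estimator
`t̂_Reg = ∑_{s,a} P(s)π(a|s)φ(s,a)ᵀβ̂ + (1/n) ∑ i w_i (r(S_i,A_i) − φ(S_i,A_i)ᵀβ̂)`
equals `(1/n) ∑ i w_i g_i r(S_i,A_i)`. -/
theorem g_weight_representation
    [Nonempty S] [Nonempty A]
    (P : S → ℝ) (pol polb : S → A → ℝ) (r : S × A → ℝ) (φ : S × A → Fin d → ℝ)
    (hP : ∀ s, 0 < P s) (hPsum : ∑ s, P s = 1)
    (hpol : ∀ s a, 0 ≤ pol s a) (hpolsum : ∀ s, ∑ a, pol s a = 1)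
    (hpolb : ∀ s a, 0 < polb s a) (hpolbsum : ∀ s, ∑ a, polb s a = 1)
    (n : ℕ) (hn : 1 ≤ n) (SA : Fin n → S × A)
    (hM : IsUnit (sampleMat pol polb φ SA).det) :
    ((1 / (n : ℝ)) •
        ∑ i, (wgt pol polb (SA i) * gWeight P pol polb φ SA i) • φ (SA i)
      = popFeat P pol φ)
    ∧ ((∑ x : S × A, P x.1 * pol x.1 x.2 * (φ x ⬝ᵥ betaHat pol polb r φ SA))
        + (1 / (n : ℝ)) *
          ∑ i, wgt pol polb (SA i) * (r (SA i) - φ (SA i) ⬝ᵥ betaHat pol polb r φ SA)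
      = (1 / (n : ℝ)) *
          ∑ i, wgt pol polb (SA i) * gWeight P pol polb φ SA i * r (SA i)) := by

  classical
  set M := sampleMat pol polb φ SA with hMdef
  set w : Fin n → ℝ := fun i => wgt pol polb (SA i) with hw
  set t : Fin d → ℝ := popFeat P pol φ with ht
  set th : Fin d → ℝ := (1 / (n : ℝ)) • ∑ j, w j • φ (SA j) with hth
  have hnR : (n : ℝ) ≠ 0 := Nat.cast_ne_zero.mpr (Nat.one_le_iff_ne_zero.mp hn)
  have hMinv : M * M⁻¹ = 1 := Matrix.mul_nonsing_inv _ hM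
  have hMsymm : Mᵀ = M := by
    rw [hMdef]; unfold sampleMat
    rw [Matrix.transpose_sum]
    refine Finset.sum_congr rfl fun i _ => ?_
    rw [Matrix.transpose_smul]
    congr 1
    ext a b
    simp [Matrix.vecMulVec_apply, mul_comm]
  -- M applied to a vector
  have hMu : ∀ u : Fin d → ℝ, M *ᵥ u = ∑ i, (w i * (φ (SA i) ⬝ᵥ u)) • φ (SA i) := by
    intro u
    ext j
    rw [hMdef]
    unfold sampleMat
    simp only [Matrix.mulVec, dotProduct, Finset.sum_apply, Matrix.sum_apply,
      Matrix.smul_apply, Matrix.vecMulVec_apply, smul_eq_mul, Finset.sum_mul,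
      Pi.smul_apply]
    rw [Finset.sum_comm]
    refine Finset.sum_congr rfl fun i _ => ?_
    simp only [hw, Finset.sum_mul, Finset.mul_sum]
    refine Finset.sum_congr rfl fun k _ => ?_
    ring
  -- key identity: the weighted sum of feature-projections reproduces any vector
  have key : ∀ v : Fin d → ℝ,
      ∑ i, (w i * (v ⬝ᵥ (M⁻¹ *ᵥ φ (SA i)))) • φ (SA i) = v := by
    intro v
    have hdp : ∀ i, v ⬝ᵥ (M⁻¹ *ᵥ φ (SA i)) = φ (SA i) ⬝ᵥ (M⁻¹ *ᵥ v) := by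
      intro i
      rw [Matrix.dotProduct_mulVec, ← Matrix.vecMul_transpose, Matrix.transpose_nonsing_inv,
        hMsymm, dotProduct_comm]
    calc ∑ i, (w i * (v ⬝ᵥ (M⁻¹ *ᵥ φ (SA i)))) • φ (SA i)
        = ∑ i, (w i * (φ (SA i) ⬝ᵥ (M⁻¹ *ᵥ v))) • φ (SA i) := by
          refine Finset.sum_congr rfl fun i _ => ?_; rw [hdp i]
      _ = M *ᵥ (M⁻¹ *ᵥ v) := (hMu _).symm
      _ = v := by rw [Matrix.mulVec_mulVec, hMinv, Matrix.one_mulVec]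
  have hg : ∀ i, gWeight P pol polb φ SA i
      = 1 + (n : ℝ) * ((t - th) ⬝ᵥ (M⁻¹ *ᵥ φ (SA i))) := by
    intro i; rfl
  -- Part (i)
  have part1 : (1 / (n : ℝ)) •
      ∑ i, (w i * gWeight P pol polb φ SA i) • φ (SA i) = t := by
    have expand : ∀ i, (w i * gWeight P pol polb φ SA i) • φ (SA i)
        = w i • φ (SA i) + (n : ℝ) • (w i * ((t - th) ⬝ᵥ (M⁻¹ *ᵥ φ (SA i)))) • φ (SA i) := by
      intro i
      rw [hg i]
      ext j
      simp only [Pi.add_apply, Pi.smul_apply, smul_eq_mul]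
      ring
    rw [Finset.sum_congr rfl fun i _ => expand i, Finset.sum_add_distrib, ← Finset.smul_sum,
      key (t - th), smul_add]
    rw [← hth]
    have : (1 / (n : ℝ)) • ((n : ℝ) • (t - th)) = t - th := by
      rw [smul_smul, one_div, inv_mul_cancel₀ hnR, one_smul]
    rw [this]
    abel
  refine ⟨part1, ?_⟩
  -- Part (ii)
  set β : Fin d → ℝ := betaHat pol polb r φ SA with hβ
  have hβeq : β = M⁻¹ *ᵥ ∑ i, (w i * r (SA i)) • φ (SA i) := rfl
  -- population term equals t ⬝ᵥ β
  have hpop : (∑ x : S × A, P x.1 * pol x.1 x.2 * (φ x ⬝ᵥ β)) = t ⬝ᵥ β := by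
    rw [ht]
    unfold popFeat
    rw [show (∑ x : S × A, (P x.1 * pol x.1 x.2) • φ x) ⬝ᵥ β
        = ∑ x : S × A, ((P x.1 * pol x.1 x.2) • φ x) ⬝ᵥ β from by
      simp [dotProduct, Finset.sum_apply, Finset.sum_mul]; exact Finset.sum_comm]
    refine Finset.sum_congr rfl fun x _ => ?_
    rw [smul_dotProduct, smul_eq_mul]
  -- sample residual correction term: (1/n) ∑ w_i (φ_i ⬝ β) = th ⬝ β
  have hth_dot : (∑ i, w i * (φ (SA i) ⬝ᵥ β)) = (∑ i, w i • φ (SA i)) ⬝ᵥ β := by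
    rw [show (∑ i, w i • φ (SA i)) ⬝ᵥ β = ∑ i, (w i • φ (SA i)) ⬝ᵥ β from by
      simp [dotProduct, Finset.sum_apply, Finset.sum_mul]; exact Finset.sum_comm]
    refine Finset.sum_congr rfl fun i _ => ?_
    rw [smul_dotProduct, smul_eq_mul]
  -- RHS expansion
  have hrhs : (∑ i, w i * gWeight P pol polb φ SA i * r (SA i))
      = (∑ i, w i * r (SA i)) + (n : ℝ) * ((t - th) ⬝ᵥ β) := by
    have expand : ∀ i, w i * gWeight P pol polb φ SA i * r (SA i)
        = w i * r (SA i) + (n : ℝ) * ((t - th) ⬝ᵥ (M⁻¹ *ᵥ ((w i * r (SA i)) • φ (SA i)))) := by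
      intro i
      rw [hg i, Matrix.mulVec_smul, dotProduct_smul]
      simp only [smul_eq_mul]
      ring
    rw [Finset.sum_congr rfl fun i _ => expand i, Finset.sum_add_distrib]
    congr 1
    rw [← Finset.mul_sum]
    congr 1
    rw [hβeq,
      show M⁻¹ *ᵥ (∑ i, (w i * r (SA i)) • φ (SA i))
          = ∑ i, M⁻¹ *ᵥ ((w i * r (SA i)) • φ (SA i)) from
        map_sum (M⁻¹).mulVecLin _ _,
      dotProduct_sum' (t - th)]
  rw [hrhs, hpop]
  have hsub : ∀ i, w i * (r (SA i) - φ (SA i) ⬝ᵥ β) = w i * r (SA i) - w i * (φ (SA i) ⬝ᵥ β) := by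
    intro i; ring
  rw [Finset.sum_congr rfl fun i _ => hsub i, Finset.sum_sub_distrib]
  have hthβ : th ⬝ᵥ β = (1 / (n : ℝ)) * ∑ i, w i * (φ (SA i) ⬝ᵥ β) := by
    rw [hth, smul_dotProduct, smul_eq_mul, hth_dot]
  have hsubdot : (t - th) ⬝ᵥ β = t ⬝ᵥ β - th ⬝ᵥ β := sub_dotProduct t th β
  rw [mul_add, hsubdot, hthβ]
  field_simp
  ring

end
end

section
/- Variance of the difference estimator: for any fixed (data-independent) reward prediction r̂ : 𝒮×𝒜 → ℝ, writing Δ(s,a) = r(s,a) − r̂(s,a) and t_Δ = Σ_{s,a} P(s)π(a|s)Δ(s,a), the difference estimator t̂_Diff = Σ_{s,a} P(s)π(a|s) r̂(s,a) + (1/n) Σ_{i=1}^n w_i Δ(S_i,A_i) has variance Var(t̂_Diff) = (1/n)(Σ_{s,a} P(s)(π(a|s)²/π_b(a|s)) Δ(s,a)² − t_Δ²). -/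
open Finset

lemma sum_pi_prod {Ω : Type*} [Fintype Ω] {n : ℕ} (g : Fin n → Ω → ℝ) :
    ∑ ω : Fin n → Ω, ∏ k, g k (ω k) = ∏ k, ∑ x, g k x := by
  rw [Finset.prod_univ_sum, Fintype.piFinset_univ]

lemma exp_coord {Ω : Type*} [Fintype Ω] {n : ℕ} (q u : Ω → ℝ)
    (hq : ∑ x, q x = 1) (i : Fin n) :
    ∑ ω : Fin n → Ω, (∏ k, q (ω k)) * u (ω i) = ∑ x, q x * u x := by
  have h1 : ∀ ω : Fin n → Ω, (∏ k, q (ω k)) * u (ω i)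
      = ∏ k, (q (ω k) * if k = i then u (ω k) else 1) := by
    intro ω
    rw [Finset.prod_mul_distrib, Finset.prod_ite_eq' Finset.univ i (fun k => u (ω k))]
    simp
  simp only [h1]
  rw [sum_pi_prod (fun k x => q x * if k = i then u x else 1)]
  have h2 : ∀ k : Fin n, (∑ x, q x * if k = i then u x else 1)
      = if k = i then ∑ x, q x * u x else 1 := by
    intro k; by_cases hk : k = i <;> simp [hk, hq]
  simp only [h2]
  rw [Finset.prod_ite_eq' Finset.univ i (fun _ => ∑ x, q x * u x)]
  simp

lemma exp_coord2 {Ω : Type*} [Fintype Ω] {n : ℕ} (q u v : Ω → ℝ)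
    (hq : ∑ x, q x = 1) (i j : Fin n) (hij : i ≠ j) :
    ∑ ω : Fin n → Ω, (∏ k, q (ω k)) * (u (ω i) * v (ω j))
      = (∑ x, q x * u x) * (∑ x, q x * v x) := by
  have h1 : ∀ ω : Fin n → Ω, (∏ k, q (ω k)) * (u (ω i) * v (ω j))
      = ∏ k, (q (ω k) * (if k = i then u (ω k) else 1) * (if k = j then v (ω k) else 1)) := by
    intro ω
    rw [Finset.prod_mul_distrib, Finset.prod_mul_distrib,
      Finset.prod_ite_eq' Finset.univ i (fun k => u (ω k)),
      Finset.prod_ite_eq' Finset.univ j (fun k => v (ω k))]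
    simp [mul_assoc]
  simp only [h1]
  rw [sum_pi_prod (fun k x => q x * (if k = i then u x else 1) * (if k = j then v x else 1))]
  have h2 : ∀ k : Fin n, (∑ x, q x * (if k = i then u x else 1) * (if k = j then v x else 1))
      = (if k = i then ∑ x, q x * u x else 1) * (if k = j then ∑ x, q x * v x else 1) := by
    intro k
    by_cases hk : k = i
    · subst hk
      simp [hij, hq]
    · by_cases hk2 : k = j <;> simp [hk, hk2, hq, hij.symm]
  simp only [h2]
  rw [Finset.prod_mul_distrib,
    Finset.prod_ite_eq' Finset.univ i (fun _ => ∑ x, q x * u x),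
    Finset.prod_ite_eq' Finset.univ j (fun _ => ∑ x, q x * v x)]
  simp

lemma var_shift_mean {Ω : Type*} [Fintype Ω] (q f : Ω → ℝ) (hq : ∑ x, q x = 1)
    (c : ℝ) (n : ℕ) (hn : 1 ≤ n) :
    varVal (fun ω : Fin n → Ω => ∏ k, q (ω k))
      (fun ω => c + (1 / (n : ℝ)) * ∑ i, f (ω i))
    = (1 / (n : ℝ)) * ((∑ x, q x * f x ^ 2) - (∑ x, q x * f x) ^ 2) := by
  have hn0 : (n : ℝ) ≠ 0 := Nat.cast_ne_zero.mpr (by omega)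
  set μ := ∑ x, q x * f x with hμ
  set g : Ω → ℝ := fun x => f x - μ with hg
  have hQ1 : ∑ ω : Fin n → Ω, ∏ k, q (ω k) = 1 := by
    have h := sum_pi_prod (fun _ : Fin n => q)
    simpa [hq] using h
  have hg0 : ∑ x, q x * g x = 0 := by
    have e : ∀ x, q x * g x = q x * f x - μ * q x := by intro x; simp [hg]; ring
    simp only [e, Finset.sum_sub_distrib, ← Finset.mul_sum, hq, ← hμ]
    ring
  have hV : ∑ x, q x * (g x * g x) = (∑ x, q x * f x ^ 2) - μ ^ 2 := by
    have e : ∀ x, q x * (g x * g x) = q x * f x ^ 2 - 2 * μ * (q x * f x) + μ ^ 2 * q x := by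
      intro x; simp [hg]; ring
    simp only [e, Finset.sum_add_distrib, Finset.sum_sub_distrib, ← Finset.mul_sum, hq, ← hμ]
    ring
  have hmean : expVal (fun ω : Fin n → Ω => ∏ k, q (ω k))
      (fun ω => c + (1 / (n : ℝ)) * ∑ i, f (ω i)) = c + μ := by
    simp only [expVal, mul_add]
    rw [Finset.sum_add_distrib, ← Finset.sum_mul, hQ1, one_mul]
    congr 1
    have e : ∀ ω : Fin n → Ω, (∏ k, q (ω k)) * ((1 / (n : ℝ)) * ∑ i, f (ω i))
        = (1 / (n : ℝ)) * ∑ i, (∏ k, q (ω k)) * f (ω i) := by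
      intro ω
      simp only [Finset.mul_sum]
      refine Finset.sum_congr rfl fun i _ => ?_
      ring
    simp only [e]
    rw [← Finset.mul_sum, Finset.sum_comm]
    have e2 : ∀ i : Fin n, ∑ ω : Fin n → Ω, (∏ k, q (ω k)) * f (ω i) = μ :=
      fun i => exp_coord q f hq i
    rw [Finset.sum_congr rfl fun i _ => e2 i, Finset.sum_const, Finset.card_univ,
      Fintype.card_fin, nsmul_eq_mul]
    field_simp
  have main : ∑ ω : Fin n → Ω, (∏ k, q (ω k)) * ((∑ i, g (ω i)) * (∑ i, g (ω i)))
      = n * (∑ x, q x * (g x * g x)) := by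
    have hexp : ∀ ω : Fin n → Ω, (∏ k, q (ω k)) * ((∑ i, g (ω i)) * (∑ i, g (ω i)))
        = ∑ i, ∑ j, (∏ k, q (ω k)) * (g (ω i) * g (ω j)) := by
      intro ω
      rw [Finset.sum_mul_sum, Finset.mul_sum]
      exact Finset.sum_congr rfl fun i _ => by rw [Finset.mul_sum]
    simp only [hexp]
    rw [Finset.sum_comm]
    have swap2 : ∀ i : Fin n, ∑ ω : Fin n → Ω, ∑ j, (∏ k, q (ω k)) * (g (ω i) * g (ω j))
        = ∑ j, ∑ ω : Fin n → Ω, (∏ k, q (ω k)) * (g (ω i) * g (ω j)) :=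
      fun i => Finset.sum_comm
      
    simp only [swap2]
    have hpair : ∀ i j : Fin n, ∑ ω : Fin n → Ω, (∏ k, q (ω k)) * (g (ω i) * g (ω j))
        = if i = j then ∑ x, q x * (g x * g x) else 0 := by
      intro i j
      by_cases h : i = j
      · subst h
        rw [if_pos rfl]
        exact exp_coord q (fun x => g x * g x) hq i
      · rw [if_neg h, exp_coord2 q g g hq i j h, hg0, mul_zero]
    simp only [hpair]
    rw [Finset.sum_congr rfl fun i _ => Finset.sum_ite_eq Finset.univ i
      (fun _ => ∑ x, q x * (g x * g x))]
    simp [Finset.card_univ, mul_comm]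
  simp only [varVal]
  rw [hmean]
  simp only [expVal]
  have key : ∀ ω : Fin n → Ω,
      (c + (1 / (n : ℝ)) * ∑ i, f (ω i) - (c + μ)) ^ 2
      = (1 / (n : ℝ)) ^ 2 * ((∑ i, g (ω i)) * (∑ i, g (ω i))) := by
    intro ω
    have hs : ∑ i, g (ω i) = (∑ i, f (ω i)) - n * μ := by
      simp [hg, Finset.sum_sub_distrib, Finset.card_univ, mul_comm]
    rw [hs]
    field_simp
    ring
  simp only [key]
  have e3 : ∀ ω : Fin n → Ω, (∏ k, q (ω k)) *
      ((1 / (n : ℝ)) ^ 2 * ((∑ i, g (ω i)) * (∑ i, g (ω i))))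
      = (1 / (n : ℝ)) ^ 2 * ((∏ k, q (ω k)) * ((∑ i, g (ω i)) * (∑ i, g (ω i)))) := by
    intro ω; ring
  simp only [e3]
  rw [← Finset.mul_sum, main, hV]
  field_simp

/-- **Variance of the difference estimator.**  For any fixed
(data-independent) reward prediction `r̂`, writing
`Δ(s,a) = r(s,a) − r̂(s,a)` and `t_Δ = ∑_{s,a} P(s)π(a|s)Δ(s,a)`, the
difference estimator
`t̂_Diff = ∑_{s,a} P(s)π(a|s)r̂(s,a) + (1/n)∑ i w_i Δ(S_i,A_i)`
over an i.i.d. off-policy sample with joint pmf `P(s)π_b(a|s)` has variance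
`(1/n)(∑_{s,a} P(s)(π(a|s)²/π_b(a|s))Δ(s,a)² − t_Δ²)`. -/
theorem difference_estimator_variance
    {S A : Type*} [Fintype S] [Fintype A] [Nonempty S] [Nonempty A]
    (P : S → ℝ) (pol polb : S → A → ℝ) (r rhat : S → A → ℝ)
    (hP : ∀ s, 0 < P s) (hPsum : ∑ s, P s = 1)
    (hpol : ∀ s a, 0 ≤ pol s a) (hpolsum : ∀ s, ∑ a, pol s a = 1)
    (hpolb : ∀ s a, 0 < polb s a) (hpolbsum : ∀ s, ∑ a, polb s a = 1)
    (n : ℕ) (hn : 1 ≤ n) :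
    varVal (fun ω : Fin n → S × A => ∏ k, P (ω k).1 * polb (ω k).1 (ω k).2)
      (fun ω => (∑ s, ∑ a, P s * pol s a * rhat s a)
        + (1 / (n : ℝ)) * ∑ i, pol (ω i).1 (ω i).2 / polb (ω i).1 (ω i).2 *
            (r (ω i).1 (ω i).2 - rhat (ω i).1 (ω i).2))
    = (1 / (n : ℝ)) *
      ((∑ s, ∑ a, P s * (pol s a ^ 2 / polb s a) * (r s a - rhat s a) ^ 2)
        - (∑ s, ∑ a, P s * pol s a * (r s a - rhat s a)) ^ 2) := by
  have hq : ∑ p : S × A, P p.1 * polb p.1 p.2 = 1 := by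
    rw [Fintype.sum_prod_type]
    simp [← Finset.mul_sum, hpolbsum, hPsum]
  have h := var_shift_mean (fun p : S × A => P p.1 * polb p.1 p.2)
      (fun p : S × A => pol p.1 p.2 / polb p.1 p.2 * (r p.1 p.2 - rhat p.1 p.2)) hq
      (∑ s, ∑ a, P s * pol s a * rhat s a) n hn
  have hE2 : ∑ p : S × A, (P p.1 * polb p.1 p.2) *
      (pol p.1 p.2 / polb p.1 p.2 * (r p.1 p.2 - rhat p.1 p.2)) ^ 2
      = ∑ s, ∑ a, P s * (pol s a ^ 2 / polb s a) * (r s a - rhat s a) ^ 2 := by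
    rw [Fintype.sum_prod_type]
    refine Finset.sum_congr rfl fun s _ => Finset.sum_congr rfl fun a _ => ?_
    have h0 := (hpolb s a).ne'
    field_simp
  have hmu : ∑ p : S × A, (P p.1 * polb p.1 p.2) *
      (pol p.1 p.2 / polb p.1 p.2 * (r p.1 p.2 - rhat p.1 p.2))
      = ∑ s, ∑ a, P s * pol s a * (r s a - rhat s a) := by
    rw [Fintype.sum_prod_type]
    refine Finset.sum_congr rfl fun s _ => Finset.sum_congr rfl fun a _ => ?_
    have h0 := (hpolb s a).ne'
    field_simp
  rw [hE2, hmu] at h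
  exact h
end

section
/- Unbiasedness of the doubly robust estimator: for any fixed (data-independent) reward prediction r̂ : 𝒮×𝒜 → ℝ, the DR estimator t̂_DR = (1/n) Σ_{i=1}^n [Σ_{a∈𝒜} π(a|S_i) r̂(S_i,a) + w_i (r(S_i,A_i) − r̂(S_i,A_i))] satisfies E[t̂_DR] = J(π). -/
open Finset

lemma iid_avg_expectation {X : Type*} [Fintype X] (p f : X → ℝ)
    (hp : ∑ x, p x = 1) (n : ℕ) (hn : 1 ≤ n) :
    (∑ ω : Fin n → X, (∏ k, p (ω k)) * ((1 / (n : ℝ)) * ∑ i, f (ω i)))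
      = ∑ x, p x * f x := by
  have hn0 : (n : ℝ) ≠ 0 := Nat.cast_ne_zero.mpr (by omega)
  have key : ∀ i : Fin n,
      ∑ ω : Fin n → X, (∏ k, p (ω k)) * f (ω i) = ∑ x, p x * f x := by
    intro i
    have h1 : ∀ ω : Fin n → X,
        (∏ k, p (ω k)) * f (ω i)
          = ∏ k, (if k = i then p (ω k) * f (ω k) else p (ω k)) := by
      intro ω
      rw [← Finset.mul_prod_erase univ (fun k => p (ω k)) (mem_univ i),
          ← Finset.mul_prod_erase univ
            (fun k => if k = i then p (ω k) * f (ω k) else p (ω k)) (mem_univ i)]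
      simp only [if_pos rfl]
      rw [Finset.prod_congr rfl
        (fun k hk => if_neg (Finset.ne_of_mem_erase hk))]
      simp only [if_true]
      ring
    simp_rw [h1]
    rw [← Fintype.prod_sum (fun k (y : X) => if k = i then p y * f y else p y)]
    have h2 : ∀ k : Fin n,
        (∑ x, if k = i then p x * f x else p x)
          = if k = i then ∑ x, p x * f x else 1 := by
      intro k
      by_cases h : k = i <;> simp [h, hp]
    simp_rw [h2]
    simp
  have expand : ∀ ω : Fin n → X,
      (∏ k, p (ω k)) * ((1 / (n : ℝ)) * ∑ i, f (ω i))
        = ∑ i, (1 / (n : ℝ)) * ((∏ k, p (ω k)) * f (ω i)) := by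
    intro ω
    rw [Finset.mul_sum, Finset.mul_sum]
    exact Finset.sum_congr rfl fun i _ => by ring
  simp_rw [expand]
  rw [Finset.sum_comm]
  simp_rw [← Finset.mul_sum, key]
  rw [Finset.sum_const, card_univ, Fintype.card_fin, nsmul_eq_mul]
  field_simp

/-- **Unbiasedness of the doubly robust estimator.**  For any fixed
(data-independent) reward prediction `r̂`, the DR estimator
`t̂_DR = (1/n)∑ i [∑_{a∈𝒜} π(a|S_i) r̂(S_i,a) + w_i (r(S_i,A_i) − r̂(S_i,A_i))]`
over an i.i.d. off-policy sample `ω : Fin n → S × A` with joint pmf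
`P(s)π_b(a|s)` satisfies `E[t̂_DR] = J(π) = ∑_{s,a} P(s)π(a|s)r(s,a)`. -/
theorem doubly_robust_unbiased
    {S A : Type*} [Fintype S] [Fintype A] [Nonempty S] [Nonempty A]
    (P : S → ℝ) (pol polb : S → A → ℝ) (r rhat : S → A → ℝ)
    (hP : ∀ s, 0 < P s) (hPsum : ∑ s, P s = 1)
    (hpol : ∀ s a, 0 ≤ pol s a) (hpolsum : ∀ s, ∑ a, pol s a = 1)
    (hpolb : ∀ s a, 0 < polb s a) (hpolbsum : ∀ s, ∑ a, polb s a = 1)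
    (n : ℕ) (hn : 1 ≤ n) :
    (∑ ω : Fin n → S × A, (∏ k, P (ω k).1 * polb (ω k).1 (ω k).2) *
      ((1 / (n : ℝ)) * ∑ i,
        ((∑ a, pol (ω i).1 a * rhat (ω i).1 a)
          + pol (ω i).1 (ω i).2 / polb (ω i).1 (ω i).2 *
              (r (ω i).1 (ω i).2 - rhat (ω i).1 (ω i).2))))
    = ∑ s, ∑ a, P s * pol s a * r s a := by
  have hp : ∑ x : S × A, P x.1 * polb x.1 x.2 = 1 := by
    rw [Fintype.sum_prod_type]
    simp_rw [← Finset.mul_sum, hpolbsum, mul_one, hPsum]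
  have hmain := iid_avg_expectation (X := S × A)
    (fun x => P x.1 * polb x.1 x.2)
    (fun x => (∑ a, pol x.1 a * rhat x.1 a)
      + pol x.1 x.2 / polb x.1 x.2 * (r x.1 x.2 - rhat x.1 x.2)) hp n hn
  rw [hmain, Fintype.sum_prod_type]
  refine Finset.sum_congr rfl fun s _ => ?_
  have hexp : ∀ a : A,
      P s * polb s a * ((∑ a', pol s a' * rhat s a')
          + pol s a / polb s a * (r s a - rhat s a))
        = P s * polb s a * (∑ a', pol s a' * rhat s a')
          + (P s * pol s a * r s a - P s * pol s a * rhat s a) := by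
    intro a
    have h0 : polb s a ≠ 0 := (hpolb s a).ne'
    field_simp
  simp_rw [hexp]
  rw [Finset.sum_add_distrib, Finset.sum_sub_distrib]
  have h3 : (∑ a, P s * polb s a * (∑ a', pol s a' * rhat s a'))
      = P s * (∑ a', pol s a' * rhat s a') := by
    have h : ∀ a : A, P s * polb s a * (∑ a', pol s a' * rhat s a')
        = (P s * (∑ a', pol s a' * rhat s a')) * polb s a := fun a => by ring
    simp_rw [h, ← Finset.mul_sum, hpolbsum, mul_one]
  have h4 : (∑ a, P s * pol s a * rhat s a)
      = P s * (∑ a', pol s a' * rhat s a') := by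
    rw [Finset.mul_sum]
    exact Finset.sum_congr rfl fun a _ => by ring
  rw [h3, h4]
  ring
end
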